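/- Let p < q be primes, let n₁, n₂ ≥ 1 be integers, and set n = p^{n₁} q^{n₂}. Then the independent domination polynomial of the comaximal graph Γ(ℤ_n) is D_i(Γ(ℤ_n), x) = φ(n)·x + x^{p^{n₁} q^{n₂−1}} + x^{p^{n₁−1} q^{n₂}}. -/

import Mathlib

open Polynomial

/-- The comaximal graph of `ℤ/nℤ`: distinct `a, b` are adjacent iff the ideal
generated by `a` and `b` is the whole ring. -/
def comaximalGraph (n : ℕ) : SimpleGraph (ZMod n) where
  Adj a b := a ≠ b ∧ Ideal.span ({a, b} : Set (ZMod n)) = ⊤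
  symm := by
    constructor
    rintro a b ⟨hab, h⟩
    refine ⟨hab.symm, ?_⟩
    rwa [Set.pair_comm]
  loopless := by
    constructor
    rintro a ⟨h, -⟩
    exact h rfl

/-- `S` is an independent dominating set of `G`. -/
def IsIndepDomSet {V : Type*} (G : SimpleGraph V) (S : Finset V) : Prop :=
  (∀ a ∈ S, ∀ b ∈ S, ¬ G.Adj a b) ∧ ∀ v : V, v ∉ S → ∃ u ∈ S, G.Adj u v

/-- The independent domination polynomial `D_i(G, x) = Σ_k d_i(G,k) x^k`. -/
noncomputable def indepDomPoly {V : Type*} (G : SimpleGraph V) : Polynomial ℝ :=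
  ∑ k ∈ Finset.range (Nat.card V + 1),
    Polynomial.C ((Nat.card {S : Finset V // IsIndepDomSet G S ∧ S.card = k}) : ℝ) *
      Polynomial.X ^ k

/-- The independence polynomial `I(G, x) = Σ_k c_k x^k`. -/
noncomputable def indepPoly {V : Type*} (G : SimpleGraph V) : Polynomial ℝ :=
  ∑ k ∈ Finset.range (Nat.card V + 1),
    Polynomial.C ((Nat.card {S : Finset V //
        (∀ a ∈ S, ∀ b ∈ S, ¬ G.Adj a b) ∧ S.card = k}) : ℝ) *
      Polynomial.X ^ k


/-!
In `ℤ/nℤ` with `n = p^{n₁} q^{n₂}`, the non-units are the multiples of `p` or of `q`, and two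
distinct residues generate the unit ideal unless both are multiples of `p` or both of `q`. So
with `A = pℤ/nℤ` and `B = qℤ/nℤ`, two distinct vertices are non-adjacent exactly when they lie
together in `A` or together in `B`. In such a graph a vertex outside `A ∪ B` is adjacent to all
others, so an independent set containing one is a singleton; an independent set inside `A ∪ B`
cannot meet both `A \ B` and `B \ A`, so lies in `A` or in `B`, and domination forces it to be all
of `A` or all of `B`. The independent dominating sets are therefore the `φ(n)` singletons of units
together with `A` and `B`, of sizes `n / p` and `n / q`.
-/

open Finset

theorem Nat.card_filter_dvd_range_mul {r : ℕ} (hr : 0 < r) (m : ℕ) :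
    #{k ∈ range (r * m) | r ∣ k} = m := by
  have : {k ∈ range (r * m) | r ∣ k} = (range m).image (r * ·) := by
    ext k
    simp only [mem_filter, mem_range, mem_image]
    constructor
    · rintro ⟨hk, j, rfl⟩
      exact ⟨j, Nat.lt_of_mul_lt_mul_left hk, rfl⟩
    · rintro ⟨j, hj, rfl⟩
      exact ⟨Nat.mul_lt_mul_of_pos_left hj hr, dvd_mul_right r j⟩
  rw [this, Finset.card_image_of_injective _ (mul_right_injective₀ hr.ne'), card_range]

theorem Nat.coprime_pow_mul_pow_iff {p q n₁ n₂ : ℕ} (hp : p.Prime) (hq : q.Prime) (h₁ : n₁ ≠ 0)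
    (h₂ : n₂ ≠ 0) (m : ℕ) : m.Coprime (p ^ n₁ * q ^ n₂) ↔ ¬p ∣ m ∧ ¬q ∣ m := by
  rw [Nat.coprime_mul_iff_right, Nat.coprime_pow_right_iff (Nat.pos_of_ne_zero h₁),
    Nat.coprime_pow_right_iff (Nat.pos_of_ne_zero h₂), Nat.coprime_comm, hp.coprime_iff_not_dvd,
    Nat.coprime_comm, hq.coprime_iff_not_dvd]

namespace ZMod

variable {n : ℕ} [NeZero n]

theorem span_pair_eq_span_gcd_val (a b : ZMod n) :
    Ideal.span {a, b} = Ideal.span {((a.val.gcd b.val : ℕ) : ZMod n)} := by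
  have := congrArg (Ideal.map (Int.castRingHom (ZMod n))) (span_gcd (a.val : ℤ) (b.val : ℤ))
  rw [Ideal.map_span, Ideal.map_span, ← Int.coe_gcd, Int.gcd_natCast_natCast] at this
  simpa [Set.image_insert_eq] using this.symm

theorem card_filter_val (P : ℕ → Prop) [DecidablePred P] :
    #{x : ZMod n | P x.val} = #{k ∈ range n | P k} :=
  card_nbij' val (fun k => (k : ZMod n)) (fun x hx => by simp_all [val_lt])
    (fun k hk => by simp_all [Nat.mod_eq_of_lt]) (fun x _ => by simp)
    (fun k hk => by simp_all [Nat.mod_eq_of_lt])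

theorem card_filter_dvd_val {r m : ℕ} (hr : 0 < r) (hn : n = r * m) :
    #{x : ZMod n | r ∣ x.val} = m := by
  rw [card_filter_val (r ∣ ·), hn, Nat.card_filter_dvd_range_mul hr]

theorem card_filter_val_coprime : #{x : ZMod n | x.val.Coprime n} = Nat.totient n := by
  rw [card_filter_val (·.Coprime n), Nat.totient_eq_card_coprime]
  simp only [Nat.coprime_comm]

end ZMod

theorem comaximalGraph_adj_iff {n : ℕ} [NeZero n] (a b : ZMod n) :
    (comaximalGraph n).Adj a b ↔ a ≠ b ∧ (a.val.gcd b.val).Coprime n := by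
  simp only [comaximalGraph]
  rw [ZMod.span_pair_eq_span_gcd_val, Ideal.span_singleton_eq_top, ZMod.isUnit_iff_coprime]

section IndepDomSet

variable {V : Type*} {G : SimpleGraph V} {A B : Finset V}

open scoped Classical in
theorem indepDomPoly_eq_sum [Fintype V] (G : SimpleGraph V) :
    indepDomPoly G = ∑ S ∈ univ.filter (IsIndepDomSet G), X ^ S.card := by
  rw [indepDomPoly, Nat.card_eq_fintype_card, ← Finset.sum_fiberwise_of_maps_to
    (g := Finset.card) (t := range (Fintype.card V + 1))
    (fun S _ => mem_range_succ_iff.mpr (card_le_univ S))]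
  refine sum_congr rfl fun k _ => ?_
  rw [Nat.card_eq_fintype_card, Fintype.card_subtype, sum_congr rfl fun S hS => by
    rw [(mem_filter.mp hS).2], sum_const, filter_filter, nsmul_eq_mul, C_eq_natCast]

theorem IsIndepDomSet.eq_of_subset {S C : Finset V} (hS : IsIndepDomSet G S) (hSC : S ⊆ C)
    (hC : ∀ x ∈ C, ∀ y ∈ C, ¬G.Adj x y) : S = C := by
  refine hSC.antisymm fun v hv => ?_
  by_contra hvS
  obtain ⟨u, huS, huv⟩ := hS.2 v hvS
  exact hC u (hSC huS) v hv huv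

theorem isIndepDomSet_singleton {u : V} (hu : ∀ v, v ≠ u → G.Adj u v) : IsIndepDomSet G {u} := by
  refine ⟨?_, fun v hv => ⟨u, mem_singleton_self u, hu v (by simpa using hv)⟩⟩
  simp only [mem_singleton]
  rintro a rfl b rfl
  exact G.irrefl

section

variable (hG : ∀ x y, G.Adj x y ↔ x ≠ y ∧ ¬(x ∈ A ∧ y ∈ A) ∧ ¬(x ∈ B ∧ y ∈ B))
include hG

theorem isIndepDomSet_of_adj_iff_left (hA : ∃ a ∈ A, a ∉ B) : IsIndepDomSet G A := by
  refine ⟨fun x hx y hy hxy => ((hG x y).1 hxy).2.1 ⟨hx, hy⟩, fun v hv => ?_⟩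
  obtain ⟨a, haA, haB⟩ := hA
  exact ⟨a, haA, (hG a v).2 ⟨by rintro rfl; exact hv haA, fun h => hv h.2, fun h => haB h.1⟩⟩

theorem isIndepDomSet_iff_of_adj_iff (hA : ∃ a ∈ A, a ∉ B) (hB : ∃ b ∈ B, b ∉ A)
    (S : Finset V) :
    IsIndepDomSet G S ↔ (∃ u, u ∉ A ∧ u ∉ B ∧ S = {u}) ∨ S = A ∨ S = B := by
  have hG' : ∀ x y, G.Adj x y ↔ x ≠ y ∧ ¬(x ∈ B ∧ y ∈ B) ∧ ¬(x ∈ A ∧ y ∈ A) :=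
    fun x y => (hG x y).trans (and_congr_right' and_comm)
  constructor
  · intro hS
    by_cases hu : ∃ u ∈ S, u ∉ A ∧ u ∉ B
    · obtain ⟨u, huS, huA, huB⟩ := hu
      have hadj : ∀ v, v ≠ u → G.Adj u v :=
        fun v hv => (hG u v).2 ⟨hv.symm, fun h => huA h.1, fun h => huB h.1⟩
      exact Or.inl ⟨u, huA, huB,
        ((isIndepDomSet_singleton hadj).eq_of_subset (singleton_subset_iff.2 huS) hS.1).symm⟩
    push Not at hu
    have hsub : S ⊆ A ∨ S ⊆ B := by
      by_contra h
      obtain ⟨⟨b, hbS, hbA⟩, ⟨s, hsS, hsB⟩⟩ := not_or.1 h |>.imp not_subset.1 not_subset.1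
      have hsA : s ∈ A := by_contra fun hsA => hsB (hu s hsS hsA)
      exact hS.1 s hsS b hbS ((hG s b).2
        ⟨by rintro rfl; exact hbA hsA, fun h => hbA h.2, fun h => hsB h.1⟩)
    refine Or.inr (hsub.imp (fun h => hS.eq_of_subset h ?_) fun h => hS.eq_of_subset h ?_) <;>
      intro x hx y hy hxy
    exacts [((hG x y).1 hxy).2.1 ⟨hx, hy⟩, ((hG x y).1 hxy).2.2 ⟨hx, hy⟩]
  · rintro (⟨u, huA, huB, rfl⟩ | rfl | rfl)
    · exact isIndepDomSet_singleton fun v hv =>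
        (hG u v).2 ⟨hv.symm, fun h => huA h.1, fun h => huB h.1⟩
    · exact isIndepDomSet_of_adj_iff_left hG hA
    · exact isIndepDomSet_of_adj_iff_left hG' hB

theorem indepDomPoly_eq_of_adj_iff [Fintype V] [DecidableEq V] (hA : ∃ a ∈ A, a ∉ B)
    (hB : ∃ b ∈ B, b ∉ A) :
    indepDomPoly G = C (#(A ∪ B)ᶜ : ℝ) * X + X ^ #A + X ^ #B := by
  classical
  have hAB : A ∉ insert B ((A ∪ B)ᶜ.image singleton) := by
    simp only [mem_insert, mem_image, mem_compl, mem_union, not_or]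
    refine ⟨?_, ?_⟩
    · rintro rfl
      obtain ⟨a, haA, haB⟩ := hA
      exact haB haA
    · rintro ⟨u, ⟨huA, -⟩, rfl⟩
      exact huA (mem_singleton_self u)
  have hB' : B ∉ (A ∪ B)ᶜ.image singleton := by
    simp only [mem_image, mem_compl, mem_union, not_or]
    rintro ⟨u, ⟨-, huB⟩, hu⟩
    exact huB (hu ▸ mem_singleton_self u)
  have hIDS : univ.filter (IsIndepDomSet G) = insert A (insert B ((A ∪ B)ᶜ.image singleton)) := by
    ext S
    simp only [mem_filter, mem_univ, true_and, isIndepDomSet_iff_of_adj_iff hG hA hB, mem_insert,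
      mem_image, mem_compl, mem_union, not_or]
    constructor
    · rintro (⟨u, huA, huB, rfl⟩ | hS | hS)
      exacts [Or.inr (Or.inr ⟨u, ⟨huA, huB⟩, rfl⟩), Or.inl hS, Or.inr (Or.inl hS)]
    · rintro (hS | hS | ⟨u, ⟨huA, huB⟩, rfl⟩)
      exacts [Or.inr (Or.inl hS), Or.inr (Or.inr hS), Or.inl ⟨u, huA, huB, rfl⟩]
  rw [indepDomPoly_eq_sum, hIDS, sum_insert hAB, sum_insert hB',
    sum_image fun _ _ _ _ => singleton_inj.1]
  simp only [card_singleton, pow_one, sum_const, nsmul_eq_mul, C_eq_natCast]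
  ring

end

end IndepDomSet

theorem comaximalGraph_adj_iff_of_eq_pow_mul_pow {n p q n₁ n₂ : ℕ} (hp : p.Prime) (hq : q.Prime)
    (h₁ : n₁ ≠ 0) (h₂ : n₂ ≠ 0) (hn : p ^ n₁ * q ^ n₂ = n) (a b : ZMod n) :
    (comaximalGraph n).Adj a b ↔
      a ≠ b ∧ ¬(p ∣ a.val ∧ p ∣ b.val) ∧ ¬(q ∣ a.val ∧ q ∣ b.val) := by
  subst hn
  have : NeZero (p ^ n₁ * q ^ n₂) :=
    ⟨mul_ne_zero (pow_ne_zero _ hp.ne_zero) (pow_ne_zero _ hq.ne_zero)⟩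
  rw [comaximalGraph_adj_iff, Nat.coprime_pow_mul_pow_iff hp hq h₁ h₂, Nat.dvd_gcd_iff,
    Nat.dvd_gcd_iff]

/-- For `n = p^{n₁} q^{n₂}` with primes `p < q` and `n₁, n₂ ≥ 1`,
`D_i(Γ(ℤ_n), x) = φ(n)·x + x^(p^{n₁} q^{n₂−1}) + x^(p^{n₁−1} q^{n₂})`. -/
theorem stmt_7 (p q n₁ n₂ : ℕ) (hp : p.Prime) (hq : q.Prime) (hpq : p < q)
    (h1 : 1 ≤ n₁) (h2 : 1 ≤ n₂) :
    indepDomPoly (comaximalGraph (p ^ n₁ * q ^ n₂)) =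
      Polynomial.C ((Nat.totient (p ^ n₁ * q ^ n₂) : ℝ)) * Polynomial.X +
        Polynomial.X ^ (p ^ n₁ * q ^ (n₂ - 1)) +
        Polynomial.X ^ (p ^ (n₁ - 1) * q ^ n₂) := by
  have h₁ : n₁ ≠ 0 := Nat.one_le_iff_ne_zero.1 h1
  have h₂ : n₂ ≠ 0 := Nat.one_le_iff_ne_zero.1 h2
  have hn_p : p ^ n₁ * q ^ n₂ = p * (p ^ (n₁ - 1) * q ^ n₂) := by
    rw [← mul_assoc, ← pow_succ', Nat.sub_add_cancel h1]
  have hn_q : p ^ n₁ * q ^ n₂ = q * (p ^ n₁ * q ^ (n₂ - 1)) := by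
    rw [mul_left_comm, ← pow_succ', Nat.sub_add_cancel h2]
  have hpq_le : p * q ≤ p ^ n₁ * q ^ n₂ :=
    Nat.mul_le_mul (Nat.le_self_pow h₁ p) (Nat.le_self_pow h₂ q)
  have hqp : ¬q ∣ p := fun h => (Nat.le_of_dvd hp.pos h).not_gt hpq
  have hpq' : ¬p ∣ q := fun h => hpq.ne ((Nat.prime_dvd_prime_iff_eq hp hq).1 h)
  have hcoprime := Nat.coprime_pow_mul_pow_iff hp hq h₁ h₂
  generalize hn : p ^ n₁ * q ^ n₂ = n at *
  have : NeZero n := ⟨((Nat.mul_pos hp.pos hq.pos).trans_le hpq_le).ne'⟩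
  have hp_val : (p : ZMod n).val = p :=
    ZMod.val_natCast_of_lt ((lt_mul_of_one_lt_right hp.pos hq.one_lt).trans_le hpq_le)
  have hq_val : (q : ZMod n).val = q :=
    ZMod.val_natCast_of_lt ((lt_mul_of_one_lt_left hq.pos hp.one_lt).trans_le hpq_le)
  let A : Finset (ZMod n) := {x | p ∣ x.val}
  let B : Finset (ZMod n) := {x | q ∣ x.val}
  have hunits : (A ∪ B)ᶜ = ({x | x.val.Coprime n} : Finset (ZMod n)) := by
    ext x
    simp [A, B, hcoprime]
  rw [indepDomPoly_eq_of_adj_iff (A := A) (B := B)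
    (comaximalGraph_adj_iff_of_eq_pow_mul_pow hp hq h₁ h₂ hn · · |>.trans (by simp [A, B]))
    ⟨p, by simp [A, B, hp_val, hqp]⟩ ⟨q, by simp [A, B, hq_val, hpq']⟩, hunits,
    ZMod.card_filter_val_coprime, ZMod.card_filter_dvd_val hp.pos hn_p,
    ZMod.card_filter_dvd_val hq.pos hn_q, add_right_comm]
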